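/- Let d be a positive integer, equip ℝ^d with the L1 norm, and let 𝔑 = { x ∈ [0,∞)^d : ‖x‖ = 1 }. Define Φ(x) = (‖x‖, x/‖x‖) for x ∈ [0,∞)^d \ {0}, and equip S = [0,∞) × 𝔑 with the metric d_U((r₁,w₁),(r₂,w₂)) = max(|r₁ − r₂|, ‖w₁ − w₂‖). Let C ⊆ [0,∞)^d be a closed cone (i.e., 0 ∈ C, C closed, and x ∈ C, t ≥ 0 ⟹ t·x ∈ C), let C_Φ = { (r,θ) ∈ S : r·θ ∈ C }, and for ε > 0 let C̄(ε) = { w·s : w ≥ 0, s ∈ 𝔑, inf_{x ∈ C ∩ 𝔑} ‖s − x‖ ≤ ε }. Then for every Borel set B ⊆ [0,∞)^d, the following are equivalent: (i) there exists ε > 0 such that inf{ ‖x − y‖ : x ∈ B, y ∈ C̄(ε) } > 0; (ii) inf{ d_U(Φ(x), z) : x ∈ B, z ∈ C_Φ } > 0. -/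

import Mathlib

open scoped Classical

/-- The `L¹` norm on `ℝ^d`. -/
noncomputable def l1 {d : ℕ} (x : Fin d → ℝ) : ℝ := ∑ i, |x i|

/-- The unit `L¹` sphere restricted to the nonnegative orthant:
`𝔑 = {x ∈ [0,∞)^d : ‖x‖₁ = 1}`. -/
def posSphere (d : ℕ) : Set (Fin d → ℝ) := {x | (∀ i, 0 ≤ x i) ∧ l1 x = 1}

/-- The metric `d_U((r₁,w₁),(r₂,w₂)) = max(|r₁ - r₂|, ‖w₁ - w₂‖₁)` on `ℝ × ℝ^d`. -/
noncomputable def dU {d : ℕ} (p q : ℝ × (Fin d → ℝ)) : ℝ :=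
  max |p.1 - q.1| (l1 (p.2 - q.2))

/-- The polar transform `Φ(x) = (‖x‖₁, x/‖x‖₁)`, with the convention
`Φ(0) = (0, (1,0,…,0))`. -/
noncomputable def polar {d : ℕ} (hd : 0 < d) (x : Fin d → ℝ) : ℝ × (Fin d → ℝ) :=
  (l1 x, if x = 0 then (fun i => if i = (⟨0, hd⟩ : Fin d) then 1 else 0) else (l1 x)⁻¹ • x)

lemma l1_nonneg {d : ℕ} (x : Fin d → ℝ) : 0 ≤ l1 x :=
  Finset.sum_nonneg fun i _ => abs_nonneg _

lemma l1_zero {d : ℕ} : l1 (0 : Fin d → ℝ) = 0 := by simp [l1]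

lemma l1_eq_zero_iff {d : ℕ} {x : Fin d → ℝ} : l1 x = 0 ↔ x = 0 := by
  constructor
  · intro h
    funext i
    have := (Finset.sum_eq_zero_iff_of_nonneg (fun i _ => abs_nonneg (x i))).1 h i
      (Finset.mem_univ i)
    simpa [abs_eq_zero] using this
  · rintro rfl; exact l1_zero

lemma l1_smul {d : ℕ} (c : ℝ) (x : Fin d → ℝ) : l1 (c • x) = |c| * l1 x := by
  simp [l1, abs_mul, Finset.mul_sum]

lemma l1_add_le {d : ℕ} (x y : Fin d → ℝ) : l1 (x + y) ≤ l1 x + l1 y := by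
  rw [l1, l1, l1, ← Finset.sum_add_distrib]
  exact Finset.sum_le_sum fun i _ => abs_add_le _ _

lemma l1_sub_le {d : ℕ} (x y z : Fin d → ℝ) : l1 (x - z) ≤ l1 (x - y) + l1 (y - z) := by
  have := l1_add_le (x - y) (y - z)
  simpa using this

lemma l1_sub_comm {d : ℕ} (x y : Fin d → ℝ) : l1 (x - y) = l1 (y - x) := by
  simp [l1, abs_sub_comm]

lemma abs_l1_sub_l1_le {d : ℕ} (x y : Fin d → ℝ) : |l1 x - l1 y| ≤ l1 (x - y) := by
  rw [l1, l1, l1, ← Finset.sum_sub_distrib]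
  refine (Finset.abs_sum_le_sum_abs _ _).trans ?_
  exact Finset.sum_le_sum fun i _ => by simpa using abs_abs_sub_abs_le_abs_sub (x i) (y i)
/-- Let `C ⊆ [0,∞)^d` be a closed cone, `C_Φ = {(r,θ) ∈ [0,∞) × 𝔑 : r·θ ∈ C}`, and for
`ε > 0` let `C̄(ε) = {w·s : w ≥ 0, s ∈ 𝔑, dist(s, C ∩ 𝔑) ≤ ε}` (interpreted as `{0}` when
`C ∩ 𝔑 = ∅`). Then for every Borel set `B ⊆ [0,∞)^d`: `B` is bounded away from `C̄(ε)` for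
some `ε > 0` iff `Φ(B)` is bounded away from `C_Φ` under `d_U`. -/
theorem stmt17 {d : ℕ} (hd : 0 < d) (C : Set (Fin d → ℝ))
    (hC0 : (0 : Fin d → ℝ) ∈ C) (hCclosed : IsClosed C)
    (hCsub : ∀ x ∈ C, ∀ i, 0 ≤ x i)
    (hCcone : ∀ x ∈ C, ∀ t : ℝ, 0 ≤ t → t • x ∈ C)
    (B : Set (Fin d → ℝ)) (hB : MeasurableSet B) (hBsub : ∀ x ∈ B, ∀ i, 0 ≤ x i) :
    (∃ ε > (0 : ℝ), ∃ δ > (0 : ℝ), ∀ x ∈ B,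
        ∀ y ∈ insert (0 : Fin d → ℝ)
          {v : Fin d → ℝ | ∃ w : ℝ, 0 ≤ w ∧ ∃ s ∈ posSphere d,
            (∃ z ∈ C, z ∈ posSphere d ∧ l1 (s - z) ≤ ε) ∧ v = w • s},
        δ ≤ l1 (x - y))
    ↔ (∃ δ > (0 : ℝ), ∀ x ∈ B, ∀ z : ℝ × (Fin d → ℝ),
        0 ≤ z.1 → z.2 ∈ posSphere d → z.1 • z.2 ∈ C → δ ≤ dU (polar hd x) z) := by
  have he0 : (fun i => if i = (⟨0, hd⟩ : Fin d) then (1:ℝ) else 0) ∈ posSphere d := by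
    constructor
    · intro i; dsimp only; split <;> norm_num
    · simp [l1, apply_ite abs, Finset.sum_ite_eq']
  constructor
  · rintro ⟨ε, hε, δ, hδ, h⟩
    refine ⟨min δ ε, lt_min hδ hε, ?_⟩
    intro x hx z hz1 hz2 hz3
    have hx0 : δ ≤ l1 x := by simpa using h x hx 0 (Set.mem_insert _ _)
    have hxne : x ≠ 0 := by
      intro h0; rw [h0, l1_zero] at hx0; linarith
    set ρ := l1 x with hρdef
    have hρ : 0 < ρ := lt_of_lt_of_le hδ hx0
    set s := ρ⁻¹ • x with hsdef
    have hρs : ρ • s = x := by rw [hsdef, smul_smul, mul_inv_cancel₀ hρ.ne', one_smul]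
    have hs : s ∈ posSphere d := by
      constructor
      · intro i
        exact mul_nonneg (inv_nonneg.2 hρ.le) (hBsub x hx i)
      · rw [hsdef, l1_smul, abs_of_nonneg (inv_nonneg.2 hρ.le), inv_mul_cancel₀ hρ.ne']
    have hpolar : polar hd x = (ρ, s) := by simp [polar, hxne]; exact ⟨rfl, rfl⟩
    rw [hpolar]
    rcases eq_or_lt_of_le hz1 with hr0 | hrpos
    · have : dU ((ρ, s) : ℝ × (Fin d → ℝ)) z = max |ρ - z.1| (l1 (s - z.2)) := rfl
      rw [this, ← hr0]
      calc min δ ε ≤ δ := min_le_left _ _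
        _ ≤ ρ := hx0
        _ = |ρ - 0| := by rw [sub_zero, abs_of_pos hρ]
        _ ≤ _ := le_max_left _ _
    · have hθC : z.2 ∈ C := by
        have := hCcone _ hz3 z.1⁻¹ (inv_nonneg.2 hz1)
        rwa [smul_smul, inv_mul_cancel₀ hrpos.ne', one_smul] at this
      by_contra hcon
      push_neg at hcon
      have hsθ : l1 (s - z.2) ≤ ε := by
        have : l1 (s - z.2) ≤ dU ((ρ, s) : ℝ × (Fin d → ℝ)) z := le_max_right _ _
        have h2 := hcon.trans_le (min_le_right δ ε)
        linarith [this.trans_lt hcon, min_le_right δ ε, le_max_right |ρ - z.1| (l1 (s - z.2))]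
      have hmem : x ∈ insert (0 : Fin d → ℝ)
          {v : Fin d → ℝ | ∃ w : ℝ, 0 ≤ w ∧ ∃ s ∈ posSphere d,
            (∃ zz ∈ C, zz ∈ posSphere d ∧ l1 (s - zz) ≤ ε) ∧ v = w • s} :=
        Set.mem_insert_of_mem _ ⟨ρ, hρ.le, s, hs, ⟨z.2, hθC, hz2, hsθ⟩, hρs.symm⟩
      have := h x hx x hmem
      rw [sub_self, l1_zero] at this
      linarith
  · rintro ⟨δ, hδ, h⟩
    refine ⟨δ / 2, by linarith, min δ (δ ^ 2 / 4), by positivity, ?_⟩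
    intro x hx y hy
    have hxne : x ≠ 0 := by
      intro h0
      have := h x hx ((0 : ℝ), fun i => if i = (⟨0, hd⟩ : Fin d) then (1:ℝ) else 0)
        le_rfl he0 (by simpa using hC0)
      rw [h0] at this
      simp [polar, dU, l1_zero] at this
      linarith
    set ρ := l1 x with hρdef
    have hρpos : 0 < ρ := by
      rcases lt_or_eq_of_le (l1_nonneg x) with h' | h'
      · exact h'
      · exact absurd (l1_eq_zero_iff.1 h'.symm) hxne
    set s := ρ⁻¹ • x with hsdef
    have hρs : ρ • s = x := by rw [hsdef, smul_smul, mul_inv_cancel₀ hρpos.ne', one_smul]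
    have hs : s ∈ posSphere d := by
      constructor
      · intro i
        exact mul_nonneg (inv_nonneg.2 hρpos.le) (hBsub x hx i)
      · rw [hsdef, l1_smul, abs_of_nonneg (inv_nonneg.2 hρpos.le), inv_mul_cancel₀ hρpos.ne']
    have hpolar : polar hd x = (ρ, s) := by simp [polar, hxne]; exact ⟨rfl, rfl⟩
    have hρδ : δ ≤ ρ := by
      have := h x hx ((0 : ℝ), s) le_rfl hs (by simpa using hC0)
      rw [hpolar] at this
      rcases (by simpa [dU, l1_zero, abs_of_pos hρpos] using this : δ ≤ ρ ∨ δ ≤ 0) with h' | h'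
      · exact h'
      · linarith
    rcases hy with rfl | ⟨w, hw, s', hs', ⟨θ, hθC, hθS, hθε⟩, rfl⟩
    · rw [sub_zero]
      exact (min_le_left _ _).trans hρδ
    · have hsθ : δ ≤ l1 (s - θ) := by
        have := h x hx ((ρ : ℝ), θ) hρpos.le hθS (hCcone θ hθC ρ hρpos.le)
        rw [hpolar] at this
        rcases (by simpa [dU] using this : δ ≤ 0 ∨ δ ≤ l1 (s - θ)) with h' | h'
        · linarith
        · exact h'
      have hss' : δ / 2 ≤ l1 (s - s') := by
        have htri := l1_sub_le s s' θ
        have : l1 (s' - θ) ≤ δ / 2 := hθε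
        linarith
      set A := l1 (x - w • s') with hA
      have h1 : |ρ - w| ≤ A := by
        have := abs_l1_sub_l1_le x (w • s')
        rwa [l1_smul, abs_of_nonneg hw, hs'.2, mul_one, ← hρdef] at this
      have h2 : ρ * l1 (s - s') ≤ A + |w - ρ| := by
        have htri := l1_sub_le x (w • s') (ρ • s')
        have e1 : l1 (x - ρ • s') = ρ * l1 (s - s') := by
          rw [← hρs, ← smul_sub, l1_smul, abs_of_pos hρpos]
        have e2 : l1 (w • s' - ρ • s') = |w - ρ| := by
          rw [← sub_smul, l1_smul, hs'.2, mul_one]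
        rw [e1, e2] at htri
        exact htri
      have h3 : |w - ρ| = |ρ - w| := abs_sub_comm _ _
      refine le_trans (min_le_right _ _) ?_
      have hA0 : 0 ≤ A := l1_nonneg _
      nlinarith [hss', hρδ, h1, h2, hδ]
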